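/- arXiv:2502.01218 — 3 statements merged into one kernel-verified Lean document; each statement's English description precedes it below -/
import Mathlib

section
/- The function h(θ) = n·log(1 + exp(η) + (n−2)·θ) − η − (n−2)·log(θ), for fixed n ≥ 2 and η ≥ 0, attains its minimum on the interval [1, exp(η)] at θ = (1+exp(η))/2, and this minimum equals n·log(n) + 2·log((1+exp(η))/2) − η. -/
open Real Set

/-- The function `h θ = n·log(1 + exp η + (n−2)·θ) − η − (n−2)·log θ`, for fixed
integer `n ≥ 2` and real `η ≥ 0`, attains its minimum on `[1, exp η]` at
`θ = (1 + exp η)/2`, and this minimum equals `n·log n + 2·log((1+exp η)/2) − η`. -/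
theorem stmt_2 (n : ℕ) (hn : 2 ≤ n) (η : ℝ) (hη : 0 ≤ η)
    (h : ℝ → ℝ)
    (hdef : ∀ θ : ℝ, h θ =
      (n : ℝ) * Real.log (1 + Real.exp η + ((n : ℝ) - 2) * θ) - η
        - ((n : ℝ) - 2) * Real.log θ) :
    (1 + Real.exp η) / 2 ∈ Set.Icc (1 : ℝ) (Real.exp η) ∧
    (∀ θ ∈ Set.Icc (1 : ℝ) (Real.exp η), h ((1 + Real.exp η) / 2) ≤ h θ) ∧
    h ((1 + Real.exp η) / 2) =
      (n : ℝ) * Real.log n + 2 * Real.log ((1 + Real.exp η) / 2) - η := by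
  have he1 : (1:ℝ) ≤ Real.exp η := Real.one_le_exp hη
  set m : ℝ := (1 + Real.exp η)/2 with hm
  have hm1 : 1 ≤ m := by rw [hm]; linarith
  have hmpos : 0 < m := by linarith
  have hn2 : (2:ℝ) ≤ (n:ℝ) := by exact_mod_cast hn
  have hnpos : (0:ℝ) < n := by linarith
  have hval : h m = n * Real.log n + 2 * Real.log m - η := by
    rw [hdef]
    have harg : 1 + Real.exp η + ((n:ℝ)-2)*m = n * m := by rw [hm]; ring
    rw [harg, Real.log_mul (ne_of_gt hnpos) (ne_of_gt hmpos)]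
    ring
  refine ⟨⟨hm1, by rw [hm]; linarith⟩, ?_, hval⟩
  intro θ hθ
  have hθ1 : 1 ≤ θ := hθ.1
  have hθpos : 0 < θ := by linarith
  rw [hval, hdef]
  have hw1 : (0:ℝ) ≤ 2/n := by positivity
  have hw2 : (0:ℝ) ≤ ((n:ℝ)-2)/n := by
    apply div_nonneg <;> linarith
  have hwsum : 2/(n:ℝ) + ((n:ℝ)-2)/n = 1 := by field_simp; ring
  have hgm := Real.geom_mean_le_arith_mean2_weighted hw1 hw2 hmpos.le hθpos.le hwsum
  have hrhs : 0 < 2/(n:ℝ) * m + ((n:ℝ)-2)/n * θ := by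
    have : (0:ℝ) < 2/(n:ℝ) * m := by positivity
    nlinarith [mul_nonneg hw2 hθpos.le]
  have hlog := Real.log_le_log (by positivity) hgm
  rw [Real.log_mul (by positivity) (by positivity),
      Real.log_rpow hmpos, Real.log_rpow hθpos] at hlog
  have key : 2 * Real.log m + ((n:ℝ)-2) * Real.log θ
      ≤ n * Real.log (2/n * m + ((n:ℝ)-2)/n * θ) := by
    have := mul_le_mul_of_nonneg_left hlog hnpos.le
    have hne : (n:ℝ) ≠ 0 := ne_of_gt hnpos
    field_simp at this
    rw [show 2/(n:ℝ) * m + ((n:ℝ)-2)/n * θ = (2*m + ((n:ℝ)-2)*θ)/n from by ring]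
    exact this
  have harg : 1 + Real.exp η + ((n:ℝ)-2)*θ = n * (2/n * m + ((n:ℝ)-2)/n * θ) := by
    field_simp [hm]; ring
  rw [harg, Real.log_mul (ne_of_gt hnpos) (ne_of_gt hrhs)]
  nlinarith [key]
end

section
/- With T, distances d_{i,j} = |i − j|, and L, L* as in the VLO lower-bound theorem: for every ε > 0 there exists an assignment of real scores R_{i,j} (satisfying R_{i,j} > R_{i,k} + γ whenever d_{i,j} < d_{i,k}, and R_{i,j} = R_{i,k} whenever d_{i,j} = d_{i,k}, for γ = log(T/(min_{i,m} n_{i,m} · ε))) such that L < L* + ε. Hence L* is a tight lower bound. -/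
open Real Finset

/-- The VLO loss. -/
noncomputable def vloLoss (T : ℕ) (R : Fin T → Fin T → ℝ) : ℝ :=
  -(1 / ((T : ℝ) * ((T : ℝ) - 1))) *
    ∑ i : Fin T, ∑ j ∈ Finset.univ.filter (fun j => j ≠ i),
      Real.log (Real.exp (R i j) /
        ∑ k ∈ Finset.univ.filter
            (fun k : Fin T => k ≠ i ∧ Nat.dist i.val j.val ≤ Nat.dist i.val k.val),
          Real.exp (R i k))

/-- The lower bound `L* = (1/(T(T−1)))·∑ᵢ ∑ₘ n_{i,m}·log n_{i,m}`. -/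
noncomputable def vloLowerBound (T : ℕ) : ℝ :=
  (1 / ((T : ℝ) * ((T : ℝ) - 1))) *
    ∑ i : Fin T, ∑ j ∈ Finset.univ.filter (fun j => j ≠ i),
      Real.log ((Finset.univ.filter
        (fun k : Fin T => k ≠ i ∧ Nat.dist i.val k.val = Nat.dist i.val j.val)).card)

/-- The minimum group size `min_{i,m} n_{i,m}` over all anchors `i` and
distance levels `m`. -/
noncomputable def minGroupSize (T : ℕ) : ℕ :=
  sInf {n : ℕ | ∃ i j : Fin T, j ≠ i ∧
    n = (Finset.univ.filter
      (fun k : Fin T => k ≠ i ∧ Nat.dist i.val k.val = Nat.dist i.val j.val)).card}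

lemma minGroup_le (T : ℕ) (i j : Fin T) (hj : j ≠ i) :
    minGroupSize T ≤ (Finset.univ.filter
      (fun k : Fin T => k ≠ i ∧ Nat.dist i.val k.val = Nat.dist i.val j.val)).card :=
  Nat.sInf_le ⟨i, j, hj, rfl⟩

lemma one_le_minGroup (T : ℕ) (hT : 2 ≤ T) : 1 ≤ minGroupSize T := by
  have h01 : (⟨1, by omega⟩ : Fin T) ≠ ⟨0, by omega⟩ := by
    simp [Fin.ext_iff]
  have hne : {n : ℕ | ∃ i j : Fin T, j ≠ i ∧
      n = (Finset.univ.filter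
        (fun k : Fin T => k ≠ i ∧ Nat.dist i.val k.val = Nat.dist i.val j.val)).card}.Nonempty :=
    ⟨_, ⟨⟨0, by omega⟩, ⟨1, by omega⟩, h01, rfl⟩⟩
  obtain ⟨i, j, hj, hn⟩ := Nat.sInf_mem hne
  rw [minGroupSize, hn]
  refine Finset.card_pos.mpr ⟨j, ?_⟩
  simp [hj]

lemma vlo_key (T : ℕ) (hT : 2 ≤ T) (c : ℝ) (hc0 : 0 < c) (m : ℕ) (hm1 : 1 ≤ m)
    (hmle : ∀ i j : Fin T, j ≠ i → m ≤ (Finset.univ.filter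
      (fun k : Fin T => k ≠ i ∧ Nat.dist i.val k.val = Nat.dist i.val j.val)).card)
    (i j : Fin T) (hj : j ≠ i) :
    Real.log (∑ k ∈ Finset.univ.filter
        (fun k : Fin T => k ≠ i ∧ Nat.dist i.val j.val ≤ Nat.dist i.val k.val),
        Real.exp (-c * (Nat.dist i.val k.val : ℝ)))
      - (-c * (Nat.dist i.val j.val : ℝ))
      ≤ Real.log ((Finset.univ.filter
          (fun k : Fin T => k ≠ i ∧ Nat.dist i.val k.val = Nat.dist i.val j.val)).card)
        + (T : ℝ) * Real.exp (-c) / m := by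
  set F := Finset.univ.filter
      (fun k : Fin T => k ≠ i ∧ Nat.dist i.val j.val ≤ Nat.dist i.val k.val) with hF
  set G := Finset.univ.filter
      (fun k : Fin T => k ≠ i ∧ Nat.dist i.val k.val = Nat.dist i.val j.val) with hG
  have hGF : G ⊆ F := by
    intro k hk
    simp only [hF, hG, Finset.mem_filter, Finset.mem_univ, true_and] at *
    exact ⟨hk.1, hk.2.ge⟩
  have hjG : j ∈ G := by simp [hG, hj]
  have hnR : (0:ℝ) < G.card := by
    have : 0 < G.card := Finset.card_pos.mpr ⟨j, hjG⟩
    exact_mod_cast this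
  have hmR : (0:ℝ) < m := by exact_mod_cast hm1
  have hmn : (m:ℝ) ≤ G.card := by exact_mod_cast hmle i j hj
  set dj : ℝ := (Nat.dist i.val j.val : ℝ) with hdj
  have hsumG : ∑ k ∈ G, Real.exp (-c * (Nat.dist i.val k.val : ℝ))
      = G.card * Real.exp (-c * dj) := by
    rw [Finset.sum_congr rfl (fun k hk => ?_), Finset.sum_const, nsmul_eq_mul]
    simp only [hG, Finset.mem_filter] at hk
    rw [hk.2.2]
  have hsumFG : ∑ k ∈ F \ G, Real.exp (-c * (Nat.dist i.val k.val : ℝ))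
      ≤ T * (Real.exp (-c * dj) * Real.exp (-c)) := by
    have hb : ∀ k ∈ F \ G, Real.exp (-c * (Nat.dist i.val k.val : ℝ))
        ≤ Real.exp (-c * dj) * Real.exp (-c) := by
      intro k hk
      simp only [Finset.mem_sdiff, hF, hG, Finset.mem_filter, Finset.mem_univ, true_and] at hk
      have hd : Nat.dist i.val j.val + 1 ≤ Nat.dist i.val k.val := by
        rcases hk with ⟨⟨hki, hle⟩, hne⟩
        have : Nat.dist i.val k.val ≠ Nat.dist i.val j.val := fun h => hne ⟨hki, h⟩
        omega
      have hdR : dj + 1 ≤ (Nat.dist i.val k.val : ℝ) := by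
        rw [hdj]; exact_mod_cast hd
      rw [← Real.exp_add]
      apply Real.exp_le_exp.mpr
      nlinarith
    calc ∑ k ∈ F \ G, Real.exp (-c * (Nat.dist i.val k.val : ℝ))
        ≤ ∑ _k ∈ F \ G, Real.exp (-c * dj) * Real.exp (-c) := Finset.sum_le_sum hb
      _ = (F \ G).card * (Real.exp (-c * dj) * Real.exp (-c)) := by
          rw [Finset.sum_const, nsmul_eq_mul]
      _ ≤ T * (Real.exp (-c * dj) * Real.exp (-c)) := by
          apply mul_le_mul_of_nonneg_right _ (by positivity)
          have : (F \ G).card ≤ T := by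
            have := Finset.card_le_card (Finset.sdiff_subset : F \ G ⊆ F)
            have h2 := Finset.card_le_univ F
            simp only [Finset.card_univ, Fintype.card_fin] at h2
            exact_mod_cast le_trans this h2
          exact_mod_cast this
  have hD : ∑ k ∈ F, Real.exp (-c * (Nat.dist i.val k.val : ℝ))
      ≤ Real.exp (-c * dj) * (G.card + T * Real.exp (-c)) := by
    rw [← Finset.sum_sdiff hGF]
    nlinarith [Real.exp_pos (-c * dj)]
  have hDpos : 0 < ∑ k ∈ F, Real.exp (-c * (Nat.dist i.val k.val : ℝ)) :=
    Finset.sum_pos (fun k _ => Real.exp_pos _) ⟨j, hGF hjG⟩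
  have h1 : Real.log (∑ k ∈ F, Real.exp (-c * (Nat.dist i.val k.val : ℝ)))
      ≤ -c * dj + Real.log ((G.card : ℝ) + T * Real.exp (-c)) := by
    calc Real.log (∑ k ∈ F, Real.exp (-c * (Nat.dist i.val k.val : ℝ)))
        ≤ Real.log (Real.exp (-c * dj) * (G.card + T * Real.exp (-c))) := by
          apply Real.log_le_log hDpos hD
      _ = -c * dj + Real.log ((G.card : ℝ) + T * Real.exp (-c)) := by
          rw [Real.log_mul (Real.exp_ne_zero _) (by positivity), Real.log_exp]
  have h2 : Real.log ((G.card : ℝ) + T * Real.exp (-c))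
      ≤ Real.log (G.card : ℝ) + T * Real.exp (-c) / G.card := by
    have hx : (0:ℝ) ≤ T * Real.exp (-c) := by positivity
    have hpos : (0:ℝ) < ((G.card : ℝ) + T * Real.exp (-c)) / G.card := by positivity
    have := Real.log_le_sub_one_of_pos hpos
    rw [Real.log_div (by positivity) (ne_of_gt hnR)] at this
    have hdiv : ((G.card : ℝ) + T * Real.exp (-c)) / G.card
        = 1 + T * Real.exp (-c) / G.card := by field_simp
    rw [hdiv] at this
    linarith
  have h3 : (T:ℝ) * Real.exp (-c) / G.card ≤ (T:ℝ) * Real.exp (-c) / m := by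
    gcongr
  linarith

/-- Tightness of the VLO lower bound: for every `ε > 0` there are scores `R`,
ordered with gap `γ = log(T/(min_{i,m} n_{i,m}·ε))` across distance levels and
equal within a level, such that `L < L* + ε`. -/
theorem stmt_15 (T : ℕ) (hT : 2 ≤ T) (ε : ℝ) (hε : 0 < ε) :
    ∃ R : Fin T → Fin T → ℝ,
      (∀ i j k : Fin T, j ≠ i → k ≠ i →
        (Nat.dist i.val j.val < Nat.dist i.val k.val →
          R i j > R i k + Real.log ((T : ℝ) / ((minGroupSize T : ℝ) * ε))) ∧
        (Nat.dist i.val j.val = Nat.dist i.val k.val → R i j = R i k)) ∧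
      vloLoss T R < vloLowerBound T + ε := by
  have hm1 : 1 ≤ minGroupSize T := one_le_minGroup T hT
  set m : ℕ := minGroupSize T with hm
  have hmR : (0:ℝ) < m := by exact_mod_cast hm1
  have hT0 : (0:ℝ) < T := by
    have : (2:ℝ) ≤ T := by exact_mod_cast hT
    linarith
  have hT1 : (1:ℝ) ≤ (T:ℝ) - 1 := by
    have : (2:ℝ) ≤ T := by exact_mod_cast hT
    linarith
  set γ : ℝ := Real.log ((T:ℝ) / (m * ε)) with hγ
  set c : ℝ := max γ 0 + 1 with hc
  have hc0 : 0 < c := by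
    have := le_max_right γ 0
    rw [hc]; linarith
  have hγc : γ < c := by
    have := le_max_left γ 0
    rw [hc]; linarith
  set δ : ℝ := (T:ℝ) * Real.exp (-c) / m with hδ
  have hδε : δ < ε := by
    have hq : (0:ℝ) < (T:ℝ) / (m * ε) := by positivity
    have hexpγ : Real.exp γ = (T:ℝ) / (m * ε) := Real.exp_log hq
    have hlt : Real.exp (-c) < Real.exp (-γ) := Real.exp_lt_exp.mpr (by linarith)
    have hexpnγ : Real.exp (-γ) = (m * ε) / T := by
      rw [Real.exp_neg, hexpγ]
      field_simp
    have hlt2 : (T:ℝ) * Real.exp (-c) < (m:ℝ) * ε := by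
      calc (T:ℝ) * Real.exp (-c) < (T:ℝ) * Real.exp (-γ) :=
            mul_lt_mul_of_pos_left hlt hT0
        _ = m * ε := by rw [hexpnγ]; field_simp
    rw [hδ, div_lt_iff₀ hmR]
    linarith [mul_comm ε (m:ℝ)]
  refine ⟨fun i j => -c * (Nat.dist i.val j.val : ℝ), ?_, ?_⟩
  · intro i j k hj hk
    constructor
    · intro hd
      have h1 : (Nat.dist i.val j.val : ℝ) + 1 ≤ (Nat.dist i.val k.val : ℝ) := by
        exact_mod_cast hd
      show -c * ((Nat.dist i.val j.val : ℝ)) > -c * ((Nat.dist i.val k.val : ℝ)) + γ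
      nlinarith [hc0, hγc, h1]
    · intro hd
      simp only [hd]
  · -- loss bound
    have hA : (0:ℝ) < (T:ℝ) * ((T:ℝ) - 1) := by nlinarith
    have hkey : ∀ i : Fin T, ∀ j ∈ Finset.univ.filter (fun j => j ≠ i),
        -(Real.log (Real.exp (-c * (Nat.dist i.val j.val : ℝ)) /
          ∑ k ∈ Finset.univ.filter
              (fun k : Fin T => k ≠ i ∧ Nat.dist i.val j.val ≤ Nat.dist i.val k.val),
            Real.exp (-c * (Nat.dist i.val k.val : ℝ))))
          ≤ Real.log ((Finset.univ.filter
              (fun k : Fin T => k ≠ i ∧ Nat.dist i.val k.val = Nat.dist i.val j.val)).card)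
            + δ := by
      intro i j hj
      rw [Finset.mem_filter] at hj
      have hj' : j ≠ i := hj.2
      have hDpos : 0 < ∑ k ∈ Finset.univ.filter
          (fun k : Fin T => k ≠ i ∧ Nat.dist i.val j.val ≤ Nat.dist i.val k.val),
          Real.exp (-c * (Nat.dist i.val k.val : ℝ)) := by
        refine Finset.sum_pos (fun k _ => Real.exp_pos _) ⟨j, ?_⟩
        simp [hj']
      rw [Real.log_div (Real.exp_ne_zero _) (ne_of_gt hDpos), Real.log_exp, neg_sub]
      exact vlo_key T hT c hc0 m hm1 (fun i j hj => minGroup_le T i j hj) i j hj'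
    have hcard : ∀ i : Fin T, (Finset.univ.filter (fun j => j ≠ i)).card = T - 1 := by
      intro i
      rw [Finset.filter_ne', Finset.card_erase_of_mem (Finset.mem_univ i)]
      simp
    calc vloLoss T (fun i j => -c * (Nat.dist i.val j.val : ℝ))
        = (1 / ((T:ℝ) * ((T:ℝ) - 1))) *
            ∑ i : Fin T, ∑ j ∈ Finset.univ.filter (fun j => j ≠ i),
              -(Real.log (Real.exp (-c * (Nat.dist i.val j.val : ℝ)) /
                ∑ k ∈ Finset.univ.filter
                    (fun k : Fin T => k ≠ i ∧ Nat.dist i.val j.val ≤ Nat.dist i.val k.val),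
                  Real.exp (-c * (Nat.dist i.val k.val : ℝ)))) := by
          rw [vloLoss]
          simp only [Finset.sum_neg_distrib]
          ring
      _ ≤ (1 / ((T:ℝ) * ((T:ℝ) - 1))) *
            ∑ i : Fin T, ∑ j ∈ Finset.univ.filter (fun j => j ≠ i),
              (Real.log ((Finset.univ.filter
                (fun k : Fin T => k ≠ i ∧ Nat.dist i.val k.val = Nat.dist i.val j.val)).card)
                + δ) := by
          apply mul_le_mul_of_nonneg_left _ (by positivity)
          exact Finset.sum_le_sum (fun i _ => Finset.sum_le_sum (hkey i))
      _ = vloLowerBound T + δ := by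
          rw [vloLowerBound]
          have hsplit : ∀ i : Fin T,
              ∑ j ∈ Finset.univ.filter (fun j => j ≠ i),
                (Real.log ((Finset.univ.filter
                  (fun k : Fin T => k ≠ i ∧ Nat.dist i.val k.val = Nat.dist i.val j.val)).card)
                  + δ)
              = (∑ j ∈ Finset.univ.filter (fun j => j ≠ i),
                  Real.log ((Finset.univ.filter
                    (fun k : Fin T => k ≠ i ∧ Nat.dist i.val k.val = Nat.dist i.val j.val)).card))
                + ((T:ℝ) - 1) * δ := by
            intro i
            rw [Finset.sum_add_distrib, Finset.sum_const, hcard i, nsmul_eq_mul]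
            congr 2
            have : (1:ℕ) ≤ T := by omega
            push_cast [Nat.cast_sub this]
            ring
          rw [Finset.sum_congr rfl (fun i _ => hsplit i), Finset.sum_add_distrib,
            Finset.sum_const, Finset.card_univ, Fintype.card_fin, nsmul_eq_mul,
            mul_add]
          congr 1
          rw [← mul_assoc]
          have : (1 / ((T:ℝ) * ((T:ℝ) - 1))) * ((T:ℝ) * (((T:ℝ) - 1) * δ)) = δ := by
            field_simp
          rw [mul_comm ((T:ℝ)-1) δ] at this ⊢
          linarith [this]
      _ < vloLowerBound T + ε := by linarith
end

section
/- In the VLO setting, for any 0 < δ < 1 there exists ε > 0 (explicitly ε = (1/(T(T−1)))·min( min_{i,m} log(1 + 1/(n_{i,m}·exp(δ + 1/δ))), 2·log((1+exp(δ))/2) − δ )) such that whenever the VLO loss satisfies L < L* + ε, the scores are δ-ordered: |R_{i,j} − R_{i,k}| < δ if d_{i,j} = d_{i,k}, and R_{i,j} > R_{i,k} + 1/δ if d_{i,j} < d_{i,k}. -/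
open Real Finset

/-- Size of the group of frames at the same temporal distance from `i` as `j`. -/
noncomputable def groupSize (T : ℕ) (i j : Fin T) : ℕ :=
  (Finset.univ.filter
    (fun k : Fin T => k ≠ i ∧ Nat.dist i.val k.val = Nat.dist i.val j.val)).card

/-! ### Auxiliary definitions and lemmas -/

/-- The "at least as far" index set appearing in the denominator of the VLO loss. -/
def Sd (T : ℕ) (i j : Fin T) : Finset (Fin T) :=
  Finset.univ.filter
    (fun k : Fin T => k ≠ i ∧ Nat.dist i.val j.val ≤ Nat.dist i.val k.val)

/-- The "same distance" group. -/
def Gd (T : ℕ) (i j : Fin T) : Finset (Fin T) :=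
  Finset.univ.filter
    (fun k : Fin T => k ≠ i ∧ Nat.dist i.val k.val = Nat.dist i.val j.val)

lemma groupSize_eq_Gd_card (T : ℕ) (i j : Fin T) : groupSize T i j = (Gd T i j).card := rfl

lemma mem_Gd {T : ℕ} {i j k : Fin T} :
    k ∈ Gd T i j ↔ k ≠ i ∧ Nat.dist i.val k.val = Nat.dist i.val j.val := by simp [Gd]

lemma mem_Sd {T : ℕ} {i j k : Fin T} :
    k ∈ Sd T i j ↔ k ≠ i ∧ Nat.dist i.val j.val ≤ Nat.dist i.val k.val := by simp [Sd]

lemma self_mem_Gd {T : ℕ} {i j : Fin T} (h : j ≠ i) : j ∈ Gd T i j := mem_Gd.mpr ⟨h, rfl⟩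

lemma self_mem_Sd {T : ℕ} {i j : Fin T} (h : j ≠ i) : j ∈ Sd T i j := mem_Sd.mpr ⟨h, le_refl _⟩

lemma Gd_subset_Sd {T : ℕ} (i j : Fin T) : Gd T i j ⊆ Sd T i j := by
  intro k hk
  rcases mem_Gd.mp hk with ⟨h1, h2⟩
  exact mem_Sd.mpr ⟨h1, h2.ge⟩

lemma Gd_eq_of_mem {T : ℕ} {i j m : Fin T} (hm : m ∈ Gd T i j) : Gd T i m = Gd T i j := by
  rcases mem_Gd.mp hm with ⟨h1, h2⟩
  ext k; rw [mem_Gd, mem_Gd, h2]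

lemma Sd_eq_of_mem {T : ℕ} {i j m : Fin T} (hm : m ∈ Gd T i j) : Sd T i m = Sd T i j := by
  rcases mem_Gd.mp hm with ⟨h1, h2⟩
  ext k; rw [mem_Sd, mem_Sd, h2]

/-- Per-pair excess term of the VLO loss over its lower bound. -/
noncomputable def tt (T : ℕ) (s : Fin T → ℝ) (i j : Fin T) : ℝ :=
  Real.log (∑ k ∈ Sd T i j, Real.exp (s k)) - s j - Real.log ((Gd T i j).card)

/-- Jensen's inequality for `log`. -/
lemma jensen_log {α : Type*} (G : Finset α) (hG : G.Nonempty) (z : α → ℝ)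
    (hz : ∀ m ∈ G, 0 < z m) :
    ∑ m ∈ G, Real.log (z m) ≤ (G.card : ℝ) * Real.log ((∑ m ∈ G, z m) / G.card) := by
  have hc : (0:ℝ) < G.card := by exact_mod_cast Finset.card_pos.mpr hG
  have h := (strictConcaveOn_log_Ioi.concaveOn).le_map_sum (t := G)
    (w := fun _ => ((G.card : ℝ))⁻¹) (p := z)
    (fun i _ => by positivity)
    (by rw [Finset.sum_const, nsmul_eq_mul]; field_simp)
    (fun i hi => Set.mem_Ioi.mpr (hz i hi))
  simp only [smul_eq_mul] at h
  rw [← Finset.mul_sum, ← Finset.mul_sum] at h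
  have h2 : (G.card : ℝ)⁻¹ * ∑ m ∈ G, z m = (∑ m ∈ G, z m) / G.card := by
    rw [div_eq_inv_mul]
  rw [h2] at h
  calc ∑ m ∈ G, Real.log (z m) = (G.card : ℝ) * ((G.card : ℝ)⁻¹ * ∑ m ∈ G, Real.log (z m)) := by
        field_simp
    _ ≤ (G.card : ℝ) * Real.log ((∑ m ∈ G, z m) / G.card) := by
        apply mul_le_mul_of_nonneg_left h hc.le

lemma log_div_card {α : Type*} (G : Finset α) (hG : G.Nonempty) (z : α → ℝ)
    (hz : ∀ m ∈ G, 0 < z m) :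
    (G.card : ℝ) * Real.log ((∑ m ∈ G, z m) / G.card)
      = (G.card : ℝ) * Real.log (∑ m ∈ G, z m) - (G.card : ℝ) * Real.log (G.card) := by
  have hc : (0:ℝ) < G.card := by exact_mod_cast Finset.card_pos.mpr hG
  have hs : 0 < ∑ m ∈ G, z m := Finset.sum_pos hz hG
  rw [Real.log_div hs.ne' hc.ne', mul_sub]

lemma key0 {α : Type*} (G : Finset α) (hG : G.Nonempty) (s : α → ℝ) :
    0 ≤ (G.card : ℝ) * Real.log (∑ m ∈ G, Real.exp (s m)) - (∑ m ∈ G, s m)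
        - (G.card : ℝ) * Real.log (G.card) := by
  have h := jensen_log G hG (fun m => Real.exp (s m)) (fun m _ => Real.exp_pos _)
  simp only [Real.log_exp] at h
  rw [log_div_card G hG _ (fun m _ => Real.exp_pos _)] at h
  linarith

lemma key1 {α : Type*} [DecidableEq α] (G : Finset α) (s : α → ℝ) (j k : α)
    (hj : j ∈ G) (hk : k ∈ G) (hjk : j ≠ k) :
    2 * Real.log ((Real.exp (s j) + Real.exp (s k)) / 2) - s j - s k
      ≤ (G.card : ℝ) * Real.log (∑ m ∈ G, Real.exp (s m)) - (∑ m ∈ G, s m)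
        - (G.card : ℝ) * Real.log (G.card) := by
  classical
  set z : α → ℝ := fun m => if m = j ∨ m = k then (Real.exp (s j) + Real.exp (s k)) / 2
    else Real.exp (s m) with hzdef
  have hzpos : ∀ m ∈ G, 0 < z m := by
    intro m _
    by_cases h : m = j ∨ m = k <;> simp [z, h] <;> positivity
  have hG : G.Nonempty := ⟨j, hj⟩
  have hkG : k ∈ G.erase j := Finset.mem_erase.mpr ⟨fun h => hjk h.symm, hk⟩
  have hsumz : ∑ m ∈ G, z m = ∑ m ∈ G, Real.exp (s m) := by
    rw [← Finset.add_sum_erase G z hj, ← Finset.add_sum_erase _ z hkG,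
        ← Finset.add_sum_erase G _ hj, ← Finset.add_sum_erase _ _ hkG]
    have hzj : z j = (Real.exp (s j) + Real.exp (s k)) / 2 := by simp [z]
    have hzk : z k = (Real.exp (s j) + Real.exp (s k)) / 2 := by simp [z]
    have heq : ∀ m ∈ (G.erase j).erase k, z m = Real.exp (s m) := by
      intro m hm
      have h1 := Finset.ne_of_mem_erase hm
      have h2 := Finset.ne_of_mem_erase (Finset.mem_of_mem_erase hm)
      simp [z, h1, h2]
    rw [Finset.sum_congr rfl heq, hzj, hzk]
    ring
  have hlogz : ∑ m ∈ G, Real.log (z m)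
      = 2 * Real.log ((Real.exp (s j) + Real.exp (s k)) / 2)
        + (∑ m ∈ G, s m) - s j - s k := by
    rw [← Finset.add_sum_erase G (fun m => Real.log (z m)) hj,
        ← Finset.add_sum_erase _ (fun m => Real.log (z m)) hkG,
        ← Finset.add_sum_erase G s hj, ← Finset.add_sum_erase _ s hkG]
    have hzj : z j = (Real.exp (s j) + Real.exp (s k)) / 2 := by simp [z]
    have hzk : z k = (Real.exp (s j) + Real.exp (s k)) / 2 := by simp [z]
    have heq : ∀ m ∈ (G.erase j).erase k, Real.log (z m) = s m := by
      intro m hm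
      have h1 := Finset.ne_of_mem_erase hm
      have h2 := Finset.ne_of_mem_erase (Finset.mem_of_mem_erase hm)
      simp [z, h1, h2, Real.log_exp]
    rw [Finset.sum_congr rfl heq, hzj, hzk]
    ring
  have h := jensen_log G hG z hzpos
  rw [log_div_card G hG z hzpos, hsumz, hlogz] at h
  linarith

lemma Bpos (δ : ℝ) (hδ : 0 < δ) : 0 < 2 * Real.log ((1 + Real.exp δ) / 2) - δ := by
  have h1 : Real.exp (δ/2) > 1 := by
    rw [← Real.exp_zero]; exact Real.exp_lt_exp.mpr (by linarith)
  have h2 : Real.exp (δ/2) < (1 + Real.exp δ) / 2 := by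
    have : Real.exp δ = Real.exp (δ/2) * Real.exp (δ/2) := by
      rw [← Real.exp_add]; ring_nf
    nlinarith [sq_nonneg (Real.exp (δ/2) - 1)]
  have h3 : δ/2 < Real.log ((1 + Real.exp δ) / 2) := by
    rw [Real.lt_log_iff_exp_lt (by positivity)]; exact h2
  linarith

lemma monoB (x y : ℝ) (hx : 0 < x) (hxy : x ≤ y) :
    2 * Real.log ((1 + Real.exp x) / 2) - x ≤ 2 * Real.log ((1 + Real.exp y) / 2) - y := by
  have hax : (1:ℝ) ≤ Real.exp x := by
    rw [← Real.exp_zero]; exact Real.exp_le_exp.mpr hx.le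
  have hab : Real.exp x ≤ Real.exp y := Real.exp_le_exp.mpr hxy
  set a := Real.exp x with ha
  set b := Real.exp y with hb
  have hmul : ((1 + a) / 2)^2 * b ≤ ((1 + b) / 2)^2 * a := by
    nlinarith [mul_nonneg (sub_nonneg.mpr hab)
      (sub_nonneg.mpr (le_trans hax (le_trans hab (by nlinarith)))), sq_nonneg (b - a)]
  have hlog := Real.log_le_log (by positivity) hmul
  rw [Real.log_mul (by positivity) (by positivity), Real.log_mul (by positivity) (by positivity),
      Real.log_pow, Real.log_pow] at hlog
  have hlx : Real.log a = x := Real.log_exp x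
  have hly : Real.log b = y := Real.log_exp y
  rw [hlx, hly] at hlog
  push_cast at hlog
  linarith

lemma pairB (a b δ : ℝ) (hδ : 0 < δ) (h : δ ≤ |a - b|) :
    2 * Real.log ((1 + Real.exp δ) / 2) - δ
      ≤ 2 * Real.log ((Real.exp a + Real.exp b) / 2) - a - b := by
  wlog hba : b ≤ a generalizing a b
  · have hthis := this b a (by rwa [abs_sub_comm]) (by linarith)
    rw [show Real.exp a + Real.exp b = Real.exp b + Real.exp a by ring]
    linarith [hthis]
  have habs : |a - b| = a - b := abs_of_nonneg (by linarith)
  rw [habs] at h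
  have hd : 0 < a - b := lt_of_lt_of_le hδ h
  have heq : 2 * Real.log ((Real.exp a + Real.exp b) / 2) - a - b
      = 2 * Real.log ((1 + Real.exp (a - b)) / 2) - (a - b) := by
    have hsplit : (Real.exp a + Real.exp b) / 2 = Real.exp b * ((1 + Real.exp (a - b)) / 2) := by
      rw [Real.exp_sub]
      field_simp
      ring
    rw [hsplit, Real.log_mul (Real.exp_ne_zero b) (by positivity), Real.log_exp]
    ring
  rw [heq]
  exact monoB δ (a - b) hδ h

lemma group_sum (T : ℕ) (s : Fin T → ℝ) (i j₀ : Fin T) :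
    ∑ m ∈ Gd T i j₀, tt T s i m
      = ((Gd T i j₀).card : ℝ) * Real.log (∑ k ∈ Sd T i j₀, Real.exp (s k))
        - (∑ m ∈ Gd T i j₀, s m)
        - ((Gd T i j₀).card : ℝ) * Real.log ((Gd T i j₀).card) := by
  have hc : ∀ m ∈ Gd T i j₀, tt T s i m
      = Real.log (∑ k ∈ Sd T i j₀, Real.exp (s k)) - s m - Real.log ((Gd T i j₀).card) := by
    intro m hm
    simp only [tt, Sd_eq_of_mem hm, Gd_eq_of_mem hm]
  rw [Finset.sum_congr rfl hc]
  simp only [Finset.sum_sub_distrib, Finset.sum_const, nsmul_eq_mul]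

/-- The group excess dominates the corresponding restricted (within-group) quantity. -/
lemma group_ge (T : ℕ) (s : Fin T → ℝ) (i j₀ : Fin T) (h : j₀ ≠ i) :
    ((Gd T i j₀).card : ℝ) * Real.log (∑ m ∈ Gd T i j₀, Real.exp (s m))
        - (∑ m ∈ Gd T i j₀, s m)
        - ((Gd T i j₀).card : ℝ) * Real.log ((Gd T i j₀).card)
      ≤ ∑ m ∈ Gd T i j₀, tt T s i m := by
  rw [group_sum T s i j₀]
  have hG : (Gd T i j₀).Nonempty := ⟨j₀, self_mem_Gd h⟩
  have hmono : Real.log (∑ m ∈ Gd T i j₀, Real.exp (s m))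
      ≤ Real.log (∑ k ∈ Sd T i j₀, Real.exp (s k)) := by
    apply Real.log_le_log (Finset.sum_pos (fun m _ => Real.exp_pos _) hG)
    exact Finset.sum_le_sum_of_subset_of_nonneg (Gd_subset_Sd i j₀)
      (fun k _ _ => (Real.exp_pos _).le)
  have hcn : (0:ℝ) ≤ (Gd T i j₀).card := Nat.cast_nonneg _
  nlinarith [mul_le_mul_of_nonneg_left hmono hcn]

lemma group_sum_nonneg (T : ℕ) (s : Fin T → ℝ) (i j₀ : Fin T) (h : j₀ ≠ i) :
    0 ≤ ∑ m ∈ Gd T i j₀, tt T s i m := by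
  have hG : (Gd T i j₀).Nonempty := ⟨j₀, self_mem_Gd h⟩
  have h0 := key0 (Gd T i j₀) hG s
  have h1 := group_ge T s i j₀ h
  linarith

/-- Sum of `tt` over a distance-closed set is nonnegative. -/
lemma closed_nonneg (T : ℕ) (s : Fin T → ℝ) (i : Fin T) :
    ∀ U : Finset (Fin T), (∀ j ∈ U, j ≠ i) →
      (∀ j ∈ U, ∀ m : Fin T, m ≠ i → Nat.dist i.val m.val = Nat.dist i.val j.val → m ∈ U) →
      0 ≤ ∑ j ∈ U, tt T s i j := by
  intro U
  induction U using Finset.strongInduction with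
  | _ U ih =>
    intro hne hcl
    rcases U.eq_empty_or_nonempty with rfl | ⟨j₀, hj₀⟩
    · simp
    · have hGU : Gd T i j₀ ⊆ U := by
        intro m hm
        rcases mem_Gd.mp hm with ⟨h1, h2⟩
        exact hcl j₀ hj₀ m h1 h2
      have hj₀G : j₀ ∈ Gd T i j₀ := self_mem_Gd (hne j₀ hj₀)
      have hsplit : (∑ j ∈ U \ Gd T i j₀, tt T s i j) + ∑ j ∈ Gd T i j₀, tt T s i j
          = ∑ j ∈ U, tt T s i j := Finset.sum_sdiff hGU
      have hss : U \ Gd T i j₀ ⊂ U := Finset.sdiff_ssubset hGU ⟨j₀, hj₀G⟩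
      have hrest : 0 ≤ ∑ j ∈ U \ Gd T i j₀, tt T s i j := by
        apply ih _ hss
        · intro j hj; exact hne j (Finset.mem_sdiff.mp hj).1
        · intro j hj m hm1 hm2
          rcases Finset.mem_sdiff.mp hj with ⟨hjU, hjG⟩
          refine Finset.mem_sdiff.mpr ⟨hcl j hjU m hm1 hm2, ?_⟩
          intro hmG
          exact hjG (mem_Gd.mpr ⟨hne j hjU, by rw [← hm2, (mem_Gd.mp hmG).2]⟩)
      have hgrp := group_sum_nonneg T s i j₀ (hne j₀ hj₀)
      linarith

/-- Extract one group's excess from the full inner sum. -/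
lemma extract (T : ℕ) (s : Fin T → ℝ) (i j₀ : Fin T) :
    ∑ m ∈ Gd T i j₀, tt T s i m ≤ ∑ j ∈ Finset.univ.filter (fun j => j ≠ i), tt T s i j := by
  classical
  set F := Finset.univ.filter (fun j : Fin T => j ≠ i) with hF
  have hGF : Gd T i j₀ ⊆ F := by
    intro m hm
    simp only [F, Finset.mem_filter, Finset.mem_univ, true_and]
    exact (mem_Gd.mp hm).1
  have hsplit : (∑ j ∈ F \ Gd T i j₀, tt T s i j) + ∑ j ∈ Gd T i j₀, tt T s i j
      = ∑ j ∈ F, tt T s i j := Finset.sum_sdiff hGF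
  have hrest : 0 ≤ ∑ j ∈ F \ Gd T i j₀, tt T s i j := by
    apply closed_nonneg T s i
    · intro j hj
      exact (Finset.mem_filter.mp (Finset.mem_sdiff.mp hj).1).2
    · intro j hj m hm1 hm2
      rcases Finset.mem_sdiff.mp hj with ⟨hjF, hjG⟩
      refine Finset.mem_sdiff.mpr ⟨by simp [F, hm1], ?_⟩
      intro hmG
      exact hjG (mem_Gd.mpr ⟨(Finset.mem_filter.mp hjF).2, by rw [← hm2, (mem_Gd.mp hmG).2]⟩)
  linarith

/-- The group excess is bounded by the total excess. -/
lemma group_le_total (T : ℕ) (R : Fin T → Fin T → ℝ) (i₀ j₀ : Fin T) :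
    ∑ m ∈ Gd T i₀ j₀, tt T (R i₀) i₀ m
      ≤ ∑ i : Fin T, ∑ j ∈ Finset.univ.filter (fun j => j ≠ i), tt T (R i) i j := by
  have h1 := extract T (R i₀) i₀ j₀
  have h2 : ∑ j ∈ Finset.univ.filter (fun j => j ≠ i₀), tt T (R i₀) i₀ j
      ≤ ∑ i : Fin T, ∑ j ∈ Finset.univ.filter (fun j => j ≠ i), tt T (R i) i j := by
    apply Finset.single_le_sum
      (f := fun i => ∑ j ∈ Finset.univ.filter (fun j => j ≠ i), tt T (R i) i j)
      (fun i _ => ?_) (Finset.mem_univ i₀)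
    apply closed_nonneg T (R i) i
    · intro j hj; exact (Finset.mem_filter.mp hj).2
    · intro j hj m hm1 _; simp [hm1]
  linarith

lemma loss_decomp (T : ℕ) (R : Fin T → Fin T → ℝ) :
    vloLoss T R = vloLowerBound T + (1 / ((T : ℝ) * ((T : ℝ) - 1))) *
      ∑ i : Fin T, ∑ j ∈ Finset.univ.filter (fun j => j ≠ i), tt T (R i) i j := by
  have key : ∀ i : Fin T, ∀ j ∈ Finset.univ.filter (fun j : Fin T => j ≠ i),
      -Real.log (Real.exp (R i j) /
        ∑ k ∈ Finset.univ.filter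
            (fun k : Fin T => k ≠ i ∧ Nat.dist i.val j.val ≤ Nat.dist i.val k.val),
          Real.exp (R i k))
      = Real.log ((Finset.univ.filter
          (fun k : Fin T => k ≠ i ∧ Nat.dist i.val k.val = Nat.dist i.val j.val)).card)
        + tt T (R i) i j := by
    intro i j hj
    have hji : j ≠ i := (Finset.mem_filter.mp hj).2
    have hD : 0 < ∑ k ∈ Sd T i j, Real.exp (R i k) :=
      Finset.sum_pos (fun k _ => Real.exp_pos _) ⟨j, self_mem_Sd hji⟩
    have hlog : Real.log (Real.exp (R i j) / ∑ k ∈ Sd T i j, Real.exp (R i k))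
        = R i j - Real.log (∑ k ∈ Sd T i j, Real.exp (R i k)) := by
      rw [Real.log_div (Real.exp_ne_zero _) hD.ne', Real.log_exp]
    show -Real.log (Real.exp (R i j) / ∑ k ∈ Sd T i j, Real.exp (R i k))
        = Real.log ((Gd T i j).card) + tt T (R i) i j
    rw [hlog, tt]
    ring
  have h1 : ∑ i : Fin T, -(∑ j ∈ Finset.univ.filter (fun j => j ≠ i),
        Real.log (Real.exp (R i j) /
          ∑ k ∈ Finset.univ.filter
              (fun k : Fin T => k ≠ i ∧ Nat.dist i.val j.val ≤ Nat.dist i.val k.val),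
            Real.exp (R i k)))
      = ∑ i : Fin T, ∑ j ∈ Finset.univ.filter (fun j => j ≠ i),
          (Real.log ((Finset.univ.filter
            (fun k : Fin T => k ≠ i ∧ Nat.dist i.val k.val = Nat.dist i.val j.val)).card)
          + tt T (R i) i j) := by
    refine Finset.sum_congr rfl fun i _ => ?_
    rw [← Finset.sum_neg_distrib]
    exact Finset.sum_congr rfl (key i)
  rw [vloLoss, neg_mul, ← mul_neg, ← Finset.sum_neg_distrib, h1]
  simp only [Finset.sum_add_distrib]
  rw [mul_add, vloLowerBound]


lemma part1_aux (T : ℕ) (δ : ℝ) (hδ0 : 0 < δ) (s : Fin T → ℝ) (i j k : Fin T)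
    (hji : j ≠ i) (hki : k ≠ i) (hjk : j ≠ k)
    (hd : Nat.dist i.val j.val = Nat.dist i.val k.val)
    (hcon : δ ≤ |s j - s k|) :
    2 * Real.log ((1 + Real.exp δ) / 2) - δ ≤ ∑ m ∈ Gd T i j, tt T s i m := by
  have hkG : k ∈ Gd T i j := mem_Gd.mpr ⟨hki, hd.symm⟩
  have hjG : j ∈ Gd T i j := self_mem_Gd hji
  have c1 := pairB (s j) (s k) δ hδ0 hcon
  have c2 := key1 (Gd T i j) s j k hjG hkG hjk
  have c3 := group_ge T s i j hji
  linarith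

lemma part2_aux (T : ℕ) (δ : ℝ) (hδ0 : 0 < δ) (s : Fin T → ℝ) (i j k : Fin T)
    (hji : j ≠ i) (hki : k ≠ i) (hd : Nat.dist i.val j.val < Nat.dist i.val k.val)
    (hnear : ∀ m ∈ Gd T i j, s m ≤ s j + δ)
    (hcon : s j ≤ s k + 1 / δ) :
    Real.log (1 + 1 / (((Gd T i j).card : ℝ) * Real.exp (δ + 1 / δ)))
      ≤ ∑ m ∈ Gd T i j, tt T s i m := by
  have hjG : j ∈ Gd T i j := self_mem_Gd hji
  have hGne : (Gd T i j).Nonempty := ⟨j, hjG⟩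
  have hkS : k ∈ Sd T i j := mem_Sd.mpr ⟨hki, hd.le⟩
  have hkG : k ∉ Gd T i j := by
    intro hmem
    exact absurd (mem_Gd.mp hmem).2 (by omega)
  set G := Gd T i j with hG
  set n : ℝ := ((G.card : ℝ)) with hn
  have hn1 : (1:ℝ) ≤ n := by
    have := Finset.card_pos.mpr hGne
    rw [hn]; exact_mod_cast this
  have hnpos : (0:ℝ) < n := by linarith
  have hE'pos : 0 < Real.exp (δ + 1/δ) := Real.exp_pos _
  set SG : ℝ := ∑ m ∈ G, Real.exp (s m) with hSG
  have hSGpos : 0 < SG := Finset.sum_pos (fun m _ => Real.exp_pos _) hGne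
  have hSGle : SG ≤ n * Real.exp (s j + δ) := by
    rw [hSG, hn]
    calc ∑ m ∈ G, Real.exp (s m) ≤ ∑ m ∈ G, Real.exp (s j + δ) := by
          apply Finset.sum_le_sum
          intro m hm
          exact Real.exp_le_exp.mpr (hnear m hm)
      _ = (G.card : ℝ) * Real.exp (s j + δ) := by
          rw [Finset.sum_const, nsmul_eq_mul]
  set c : ℝ := 1 / (n * Real.exp (δ + 1/δ)) with hc
  have hcpos : 0 < c := by
    rw [hc]; exact div_pos one_pos (mul_pos hnpos hE'pos)
  have hek : c * SG ≤ Real.exp (s k) := by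
    have h1 : c * SG ≤ c * (n * Real.exp (s j + δ)) :=
      mul_le_mul_of_nonneg_left hSGle hcpos.le
    have h2 : c * (n * Real.exp (s j + δ)) = Real.exp (s j - 1/δ) := by
      rw [hc]
      have hEe : Real.exp (s j + δ) = Real.exp (s j - 1/δ) * Real.exp (δ + 1/δ) := by
        rw [← Real.exp_add]; ring_nf
      rw [hEe]
      field_simp
    have h3 : Real.exp (s j - 1/δ) ≤ Real.exp (s k) := by
      apply Real.exp_le_exp.mpr
      linarith
    calc c * SG ≤ c * (n * Real.exp (s j + δ)) := h1
      _ = Real.exp (s j - 1/δ) := h2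
      _ ≤ Real.exp (s k) := h3
  have hSdge : (1 + c) * SG ≤ ∑ m ∈ Sd T i j, Real.exp (s m) := by
    have hins : Real.exp (s k) + SG = ∑ m ∈ insert k G, Real.exp (s m) := by
      rw [Finset.sum_insert hkG, hSG]
    have hsub : insert k G ⊆ Sd T i j := by
      intro m hm
      rcases Finset.mem_insert.mp hm with rfl | hmG
      · exact hkS
      · exact Gd_subset_Sd i j hmG
    have hle : ∑ m ∈ insert k G, Real.exp (s m) ≤ ∑ m ∈ Sd T i j, Real.exp (s m) :=
      Finset.sum_le_sum_of_subset_of_nonneg hsub (fun m _ _ => (Real.exp_pos _).le)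
    have hle2 : Real.exp (s k) + SG ≤ ∑ m ∈ Sd T i j, Real.exp (s m) := by
      rw [hins]; exact hle
    have hexp : (1 + c) * SG = SG + c * SG := by ring
    linarith
  have hlogchain : n * Real.log (1 + c) + n * Real.log SG
      ≤ n * Real.log (∑ m ∈ Sd T i j, Real.exp (s m)) := by
    have hlg : Real.log ((1 + c) * SG) ≤ Real.log (∑ m ∈ Sd T i j, Real.exp (s m)) :=
      Real.log_le_log (by positivity) hSdge
    rw [Real.log_mul (by positivity) hSGpos.ne'] at hlg
    have hmm := mul_le_mul_of_nonneg_left hlg hnpos.le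
    nlinarith [hmm]
  have h0 := key0 G hGne s
  have hgs := group_sum T s i j
  have hlogc_nonneg : 0 ≤ Real.log (1 + c) := Real.log_nonneg (by linarith)
  rw [← hG] at hgs
  rw [show (1:ℝ) + 1 / ((G.card : ℝ) * Real.exp (δ + 1/δ)) = 1 + c by rw [hc, hn]]
  rw [hgs, ← hn]
  rw [← hn, ← hSG] at h0
  have hone : 1 * Real.log (1 + c) ≤ n * Real.log (1 + c) :=
    mul_le_mul_of_nonneg_right hn1 hlogc_nonneg
  linarith [h0, hlogchain, hone]

/-- δ-ordering from near-optimality of the VLO loss: for any `0 < δ < 1`, with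
the explicit `ε = (1/(T(T−1)))·min( min_{i,m} log(1 + 1/(n_{i,m}·exp(δ+1/δ))),
2·log((1+exp δ)/2) − δ )`, we have `ε > 0`, and whenever `L < L* + ε` the scores
are δ-ordered: `|R i j − R i k| < δ` if `d i j = d i k`, and
`R i j > R i k + 1/δ` if `d i j < d i k`. -/
theorem stmt_16 (T : ℕ) (hT : 2 ≤ T) (δ : ℝ) (hδ0 : 0 < δ) (hδ1 : δ < 1)
    (ε : ℝ)
    (hεdef : ε = (1 / ((T : ℝ) * ((T : ℝ) - 1))) *
      min
        (sInf {x : ℝ | ∃ i j : Fin T, j ≠ i ∧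
          x = Real.log (1 + 1 / ((groupSize T i j : ℝ) * Real.exp (δ + 1 / δ)))})
        (2 * Real.log ((1 + Real.exp δ) / 2) - δ)) :
    0 < ε ∧
    ∀ R : Fin T → Fin T → ℝ, vloLoss T R < vloLowerBound T + ε →
      ∀ i j k : Fin T, j ≠ i → k ≠ i →
        (Nat.dist i.val j.val = Nat.dist i.val k.val → |R i j - R i k| < δ) ∧
        (Nat.dist i.val j.val < Nat.dist i.val k.val → R i j > R i k + 1 / δ) := by
  have hT2 : (2:ℝ) ≤ (T:ℝ) := by exact_mod_cast hT
  have hN : (0:ℝ) < (T:ℝ) * ((T:ℝ) - 1) := by nlinarith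
  have hfin : {x : ℝ | ∃ i j : Fin T, j ≠ i ∧
      x = Real.log (1 + 1 / ((groupSize T i j : ℝ) * Real.exp (δ + 1 / δ)))}.Finite := by
    apply Set.Finite.subset (Set.finite_range
      (fun p : Fin T × Fin T =>
        Real.log (1 + 1 / ((groupSize T p.1 p.2 : ℝ) * Real.exp (δ + 1 / δ)))))
    rintro x ⟨i, j, _, rfl⟩
    exact ⟨(i, j), rfl⟩
  have hgs_pos : ∀ i j : Fin T, j ≠ i → 0 < groupSize T i j := by
    intro i j hj
    rw [groupSize_eq_Gd_card]
    exact Finset.card_pos.mpr ⟨j, self_mem_Gd hj⟩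
  have hi0 : ((⟨1, by omega⟩ : Fin T)) ≠ (⟨0, by omega⟩ : Fin T) := by
    intro h
    have := congrArg Fin.val h
    simp at this
  have hne : {x : ℝ | ∃ i j : Fin T, j ≠ i ∧
      x = Real.log (1 + 1 / ((groupSize T i j : ℝ) * Real.exp (δ + 1 / δ)))}.Nonempty :=
    ⟨_, ⟨⟨0, by omega⟩, ⟨1, by omega⟩, hi0, rfl⟩⟩
  have hmemA := hne.csInf_mem hfin
  have hApos : 0 < sInf {x : ℝ | ∃ i j : Fin T, j ≠ i ∧
      x = Real.log (1 + 1 / ((groupSize T i j : ℝ) * Real.exp (δ + 1 / δ)))} := by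
    obtain ⟨i, j, hji, hx⟩ := hmemA
    rw [hx]
    apply Real.log_pos
    have hgs := hgs_pos i j hji
    have hn1 : (1:ℝ) ≤ (groupSize T i j : ℝ) := by exact_mod_cast hgs
    have : 0 < 1 / ((groupSize T i j : ℝ) * Real.exp (δ + 1 / δ)) := by positivity
    linarith
  have hAle : ∀ i j : Fin T, j ≠ i →
      sInf {x : ℝ | ∃ i j : Fin T, j ≠ i ∧
        x = Real.log (1 + 1 / ((groupSize T i j : ℝ) * Real.exp (δ + 1 / δ)))}
      ≤ Real.log (1 + 1 / ((groupSize T i j : ℝ) * Real.exp (δ + 1 / δ))) := by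
    intro i j hj
    exact csInf_le hfin.bddBelow ⟨i, j, hj, rfl⟩
  have hB := Bpos δ hδ0
  have hεpos : 0 < ε := by
    rw [hεdef]
    exact mul_pos (by positivity) (lt_min hApos hB)
  refine ⟨hεpos, ?_⟩
  intro R hL
  have hEbound : ∑ i : Fin T, ∑ j ∈ Finset.univ.filter (fun j => j ≠ i), tt T (R i) i j
      < min
        (sInf {x : ℝ | ∃ i j : Fin T, j ≠ i ∧
          x = Real.log (1 + 1 / ((groupSize T i j : ℝ) * Real.exp (δ + 1 / δ)))})
        (2 * Real.log ((1 + Real.exp δ) / 2) - δ) := by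
    have hd := loss_decomp T R
    rw [hd, hεdef] at hL
    have h1N : (0:ℝ) < 1 / ((T:ℝ) * ((T:ℝ) - 1)) := by positivity
    have h2 : 1 / ((T:ℝ) * ((T:ℝ) - 1)) *
        (∑ i : Fin T, ∑ j ∈ Finset.univ.filter (fun j => j ≠ i), tt T (R i) i j)
        < 1 / ((T:ℝ) * ((T:ℝ) - 1)) * min
          (sInf {x : ℝ | ∃ i j : Fin T, j ≠ i ∧
            x = Real.log (1 + 1 / ((groupSize T i j : ℝ) * Real.exp (δ + 1 / δ)))})
          (2 * Real.log ((1 + Real.exp δ) / 2) - δ) := by linarith [hL]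
    exact lt_of_mul_lt_mul_left h2 h1N.le
  have part1 : ∀ i j k : Fin T, j ≠ i → k ≠ i →
      Nat.dist i.val j.val = Nat.dist i.val k.val → |R i j - R i k| < δ := by
    intro i j k hji hki hd
    by_contra hcon
    push_neg at hcon
    have hjk : j ≠ k := by
      rintro rfl
      simp at hcon
      linarith
    have h1 := part1_aux T δ hδ0 (R i) i j k hji hki hjk hd hcon
    have c4 := group_le_total T R i j
    have c5 := lt_of_lt_of_le hEbound (min_le_right _ _)
    linarith
  have part2 : ∀ i j k : Fin T, j ≠ i → k ≠ i →
      Nat.dist i.val j.val < Nat.dist i.val k.val → R i j > R i k + 1 / δ := by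
    intro i j k hji hki hd
    by_contra hcon
    push_neg at hcon
    have hnear : ∀ m ∈ Gd T i j, R i m ≤ R i j + δ := by
      intro m hm
      have h := part1 i m j (mem_Gd.mp hm).1 hji (mem_Gd.mp hm).2
      linarith [(abs_lt.mp h).2]
    have h1 := part2_aux T δ hδ0 (R i) i j k hji hki hd hnear hcon
    have hA1 := hAle i j hji
    rw [groupSize_eq_Gd_card] at hA1
    have c4 := group_le_total T R i j
    have c5 := lt_of_lt_of_le hEbound (min_le_left _ _)
    linarith
  intro i j k hji hki
  exact ⟨part1 i j k hji hki, part2 i j k hji hki⟩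
end
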